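/- arXiv:2304.08301 — 2 statements merged into one kernel-verified Lean document; each statement's English description precedes it below -/
import Mathlib

section
/- Let N ≥ 1, λ ∈ ℝ, let d₁ = ⋯ = d_N = 1 and d_{N+1} = ⋯ = d_{2N} = −1, let F : ℝ² → ℝ be even and continuously differentiable away from ℤ², and fix k ∈ ℤ². Suppose a = (a₁, …, a_{2N}) : [0,T) → (ℝ²)^{2N} is a C¹ solution of the reduced dynamical law ȧ_j − λ d_j 𝕁 ȧ_j = −(1/π) ∇_{a_j} W(a), whose components stay pairwise distinct modulo ℤ². Then the quantity ξ(a(t)) = Σ_{j=1}^{2N} a_j(t) − λ 𝕁 Σ_{j=1}^{2N} d_j a_j(t) is a first integral: ξ(a(t)) = ξ(a(0)) for all t ∈ [0,T). -/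
/-!
Summing the reduced dynamical law over `j`, the left-hand sides add up to `d/dt ξ(a)`. On the
right-hand side the `q(a)` terms carry the factor `∑ d_j = 0`, while the interaction terms
`d_j d_l ∇F(a_j - a_l)` are antisymmetric in `(j, l)`, since `∇F` is odd for even `F`, and cancel
in pairs. So `ξ(a(t))` has zero derivative on the convex set `[0, T)` and is constant there.
-/

noncomputable section

open Real Set

/-- The symplectic matrix `𝕁` (rows `(0,1)` and `(−1,0)`) acting on `ℝ²`. -/
def Jmat (v : ℝ × ℝ) : ℝ × ℝ := (v.2, -v.1)

/-- The gradient vector of a function `F : ℝ² → ℝ`. -/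
def gradF (F : ℝ × ℝ → ℝ) (p : ℝ × ℝ) : ℝ × ℝ :=
  (fderiv ℝ F p (1, 0), fderiv ℝ F p (0, 1))

open Finset

theorem Finset.sum_sum_erase_eq_zero_of_antisymm {ι M : Type*} [DecidableEq ι]
    [AddCommMonoid M] (s : Finset ι) (c : ι → ι → M)
    (hc : ∀ j ∈ s, ∀ l ∈ s, j ≠ l → c j l + c l j = 0) :
    ∑ j ∈ s, ∑ l ∈ s.erase j, c j l = 0 := by
  rw [sum_sigma']
  refine sum_involution (fun p _ => ⟨p.2, p.1⟩) ?_ ?_ ?_ (fun _ _ => rfl)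
  all_goals
    rintro ⟨j, l⟩ h
    simp only [mem_sigma, mem_erase] at h
  · exact hc j h.1 l h.2.2 h.2.1.symm
  · simp [h.2.1]
  · simp [h.1, h.2.2, h.2.1.symm]

theorem sum_smul_sum_erase_smul_odd_eq_zero {ι E M : Type*} [Fintype ι] [DecidableEq ι]
    [AddCommGroup E] [AddCommGroup M] [Module ℝ M] {G : E → M} (hG : ∀ x, G (-x) = -G x)
    (d : ι → ℝ) (b : ι → E) :
    ∑ j, d j • ∑ l ∈ univ.erase j, d l • G (b j - b l) = 0 := by
  simp_rw [smul_sum, smul_smul]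
  refine sum_sum_erase_eq_zero_of_antisymm _ _ fun j _ l _ _ => ?_
  rw [← neg_sub (b j), hG, smul_neg, mul_comm, add_neg_cancel]

/-- No differentiability is needed: `F` is differentiable at `p` iff it is at `-p`, and otherwise
both `fderiv`s are the junk value `0`. -/
theorem gradF_neg {F : ℝ × ℝ → ℝ} (hF : ∀ p, F (-p) = F p) (p : ℝ × ℝ) :
    gradF F (-p) = -gradF F p := by
  have h := fderiv_comp_smul (𝕜 := ℝ) (f := F) (x := p) (-1)
  simp only [neg_one_smul, hF] at h
  simp [gradF, h]

theorem sum_sign_eq_zero (N : ℕ) (d : Fin (2 * N) → ℝ)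
    (hd : ∀ j : Fin (2 * N), d j = if (j : ℕ) < N then 1 else -1) :
    ∑ j, d j = 0 := by
  simp only [hd, Fin.sum_univ_eq_sum_range (fun i => if i < N then (1 : ℝ) else -1), two_mul,
    sum_range_add]
  rw [sum_congr rfl fun i hi => if_pos (mem_range.mp hi)]
  simp

theorem sum_rdl_rhs_eq_zero {ι : Type*} [Fintype ι] [DecidableEq ι] {F : ℝ × ℝ → ℝ}
    (hF : ∀ p, F (-p) = F p) {d : ι → ℝ} (hd : ∑ j, d j = 0) (b : ι → ℝ × ℝ) (Q : ℝ × ℝ) :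
    ∑ j, (-(1 / π)) • ((2 * π * d j) •
      (-(∑ l ∈ univ.erase j, d l • gradF F (b j - b l)) + Q)) = 0 := by
  have hscalar : ∀ j, -(1 / π) * (2 * π * d j) = -2 * d j := fun j => by
    field_simp [pi_ne_zero]
  simp_rw [smul_smul, hscalar, mul_smul (-2 : ℝ), ← smul_sum, smul_add, smul_neg, sum_add_distrib,
    sum_neg_distrib, ← sum_smul, hd, sum_smul_sum_erase_smul_odd_eq_zero (gradF_neg hF), zero_smul,
    neg_zero, add_zero, smul_zero]

def JmatCLM : ℝ × ℝ →L[ℝ] ℝ × ℝ :=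
  (ContinuousLinearMap.snd ℝ ℝ ℝ).prod (-ContinuousLinearMap.fst ℝ ℝ ℝ)

theorem JmatCLM_apply (v : ℝ × ℝ) : JmatCLM v = Jmat v := rfl

def xi {ι : Type*} [Fintype ι] (lam : ℝ) (d : ι → ℝ) (b : ι → ℝ × ℝ) : ℝ × ℝ :=
  ∑ j, b j - lam • Jmat (∑ j, d j • b j)

theorem hasDerivWithinAt_xi {ι : Type*} [Fintype ι] (lam : ℝ) (d : ι → ℝ) {b : ℝ → ι → ℝ × ℝ}
    {b' : ι → ℝ × ℝ} {s : Set ℝ} {t : ℝ} (hb : ∀ j, HasDerivWithinAt (fun u => b u j) (b' j) s t) :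
    HasDerivWithinAt (fun u => xi lam d (b u)) (∑ j, (b' j - (lam * d j) • Jmat (b' j))) s t := by
  have hsum := HasDerivWithinAt.fun_sum fun j (_ : j ∈ Finset.univ) => hb j
  have hJ :
      HasDerivWithinAt (fun u => JmatCLM (∑ j, d j • b u j)) (JmatCLM (∑ j, d j • b' j)) s t :=
    JmatCLM.hasFDerivAt.comp_hasDerivWithinAt t
      (HasDerivWithinAt.fun_sum fun j _ => (hb j).const_smul (d j))
  refine (hsum.sub (hJ.const_smul lam)).congr_deriv ?_
  simp only [map_sum, map_smul, JmatCLM_apply, smul_sum, smul_smul, sum_sub_distrib]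

theorem Convex.eq_of_hasDerivWithinAt_eq_zero {E : Type*} [NormedAddCommGroup E]
    [NormedSpace ℝ E] {f : ℝ → E} {s : Set ℝ} (hs : Convex ℝ s)
    (hf : ∀ x ∈ s, HasDerivWithinAt f 0 s x) {x y : ℝ} (hx : x ∈ s) (hy : y ∈ s) : f x = f y := by
  have := hs.norm_image_sub_le_of_norm_hasDerivWithin_le hf (fun _ _ => norm_zero.le) hx hy
  simpa [sub_eq_zero, eq_comm] using this

theorem first_integral_of_RDL_general (N : ℕ) (lam T : ℝ)
    (F : ℝ × ℝ → ℝ) (hFeven : ∀ p : ℝ × ℝ, F (-p) = F p)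
    (d : Fin (2*N) → ℝ) (hd : ∀ j : Fin (2*N), d j = if (j : ℕ) < N then 1 else -1)
    (q : (Fin (2*N) → ℝ × ℝ) → ℝ × ℝ)
    (a a' : ℝ → Fin (2*N) → ℝ × ℝ)
    (hderiv : ∀ t ∈ Ico (0:ℝ) T, ∀ j,
      HasDerivWithinAt (fun s => a s j) (a' t j) (Ico (0:ℝ) T) t)
    (hRDL : ∀ t ∈ Ico (0:ℝ) T, ∀ j : Fin (2*N),
      a' t j - (lam * d j) • Jmat (a' t j)
        = (-(1/π)) • ((2*π*(d j)) •
            (-(∑ l ∈ Finset.univ.erase j, d l • gradF F (a t j - a t l)) + q (a t)))) :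
    ∀ t ∈ Ico (0:ℝ) T,
      (∑ j, a t j) - lam • Jmat (∑ j, d j • a t j)
        = (∑ j, a 0 j) - lam • Jmat (∑ j, d j • a 0 j) := by
  intro t ht
  have hxi : ∀ s ∈ Ico (0:ℝ) T, HasDerivWithinAt (fun u => xi lam d (a u)) 0 (Ico 0 T) s := by
    intro s hs
    have h := hasDerivWithinAt_xi lam d (hderiv s hs)
    rwa [sum_congr rfl fun j _ => hRDL s hs j,
      sum_rdl_rhs_eq_zero hFeven (sum_sign_eq_zero N d hd)] at h
  exact (convex_Ico 0 T).eq_of_hasDerivWithinAt_eq_zero hxi ht ⟨le_rfl, ht.1.trans_lt ht.2⟩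

/-- along a C¹ solution of the reduced dynamical law
`ȧ_j − λ d_j 𝕁 ȧ_j = −(1/π) ∇_{a_j} W(a)`, the quantity
`ξ(a) = Σ_j a_j − λ 𝕁 Σ_j d_j a_j` is a first integral. -/
theorem first_integral_of_RDL (N : ℕ) (hN : 1 ≤ N) (lam T : ℝ) (hT : 0 < T)
    (F : ℝ × ℝ → ℝ) (hFeven : ∀ p : ℝ × ℝ, F (-p) = F p)
    (hFC1 : ∀ p : ℝ × ℝ, (∀ m n : ℤ, p ≠ ((m : ℝ), (n : ℝ))) → ContDiffAt ℝ 1 F p)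
    (k : ℤ × ℤ)
    (d : Fin (2*N) → ℝ) (hd : ∀ j : Fin (2*N), d j = if (j : ℕ) < N then 1 else -1)
    (q : (Fin (2*N) → ℝ × ℝ) → ℝ × ℝ)
    (hq : ∀ b : Fin (2*N) → ℝ × ℝ,
      q b = (2*π) • ∑ l, d l • b l + (2*π) • (((k.1 : ℝ), (k.2 : ℝ)) : ℝ × ℝ))
    (a a' : ℝ → Fin (2*N) → ℝ × ℝ)
    (hderiv : ∀ t ∈ Ico (0:ℝ) T, ∀ j,
      HasDerivWithinAt (fun s => a s j) (a' t j) (Ico (0:ℝ) T) t)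
    (hcont : ContinuousOn a' (Ico (0:ℝ) T))
    (hdist : ∀ t ∈ Ico (0:ℝ) T, ∀ j l : Fin (2*N), j ≠ l →
      ∀ m n : ℤ, a t j - a t l ≠ ((m : ℝ), (n : ℝ)))
    (hRDL : ∀ t ∈ Ico (0:ℝ) T, ∀ j : Fin (2*N),
      a' t j - (lam * d j) • Jmat (a' t j)
        = (-(1/π)) • ((2*π*(d j)) •
            (-(∑ l ∈ Finset.univ.erase j, d l • gradF F (a t j - a t l)) + q (a t)))) :
    ∀ t ∈ Ico (0:ℝ) T,
      (∑ j, a t j) - lam • Jmat (∑ j, d j • a t j)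
        = (∑ j, a 0 j) - lam • Jmat (∑ j, d j • a 0 j) :=
  first_integral_of_RDL_general N lam T F hFeven d hd q a a' hderiv hRDL
end
end

section
/- Let T > 0, C ≥ 0, and let ζ : [0,T] → [0,∞) be Lipschitz with ζ(0) = 0, such that for almost every t ∈ [0,T] one has |ζ'(t)| ≤ C ζ(t) + ∫_0^t |ζ'(s)| ds. Then ζ(t) = 0 for all t ∈ [0,T]. -/
/-!
A Lipschitz function is absolutely continuous, so `ζ t ≤ F t := ∫₀ᵗ |ζ'|`, and the hypothesis gives
`F ≤ (C + 1) ∫₀ᵗ F`. The differential Gronwall inequality applied to `∫₀ᵗ F`, which vanishes at `0`,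
forces `∫₀ᵗ F = 0`, hence `F = 0` and `ζ = 0`.
-/

open Set MeasureTheory intervalIntegral

theorem ContinuousOn.hasDerivWithinAt_integral_Icc {u : ℝ → ℝ} {a b x : ℝ}
    (hu : ContinuousOn u (Icc a b)) (hx : x ∈ Icc a b) :
    HasDerivWithinAt (fun t => ∫ s in a..t, u s) (u x) (Icc a b) x := by
  have := Fact.mk hx -- provides the `FTCFilter` instance for `Icc a b`
  exact integral_hasDerivWithinAt_right
    ((hu.mono (Icc_subset_Icc_right hx.2)).intervalIntegrable_of_Icc hx.1)
    (hu.stronglyMeasurableAtFilter_nhdsWithin measurableSet_Icc x) (hu.continuousWithinAt hx)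

theorem ContinuousOn.eq_zero_of_le_mul_integral {u : ℝ → ℝ} {L a b : ℝ}
    (hu : ContinuousOn u (Icc a b)) (hu0 : ∀ t ∈ Icc a b, 0 ≤ u t)
    (hbound : ∀ t ∈ Icc a b, u t ≤ L * ∫ s in a..t, u s) :
    ∀ t ∈ Icc a b, u t = 0 := by
  have hU_nonneg : ∀ t ∈ Icc a b, 0 ≤ ∫ s in a..t, u s := fun t ht =>
    integral_nonneg ht.1 fun s hs => hu0 s ⟨hs.1, hs.2.trans ht.2⟩
  have hU_zero : ∀ t ∈ Icc a b, ∫ s in a..t, u s = 0 :=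
    eq_zero_of_abs_deriv_le_mul_abs_self_of_eq_zero_right (K := L)
      (fun t ht => (hu.hasDerivWithinAt_integral_Icc ht).continuousWithinAt)
      (fun t ht => (hu.hasDerivWithinAt_integral_Icc (Ico_subset_Icc_self ht)).mono_of_mem_nhdsWithin
        (Icc_mem_nhdsGE_of_mem ht))
      integral_same
      (fun t ht => by
        have ht' := Ico_subset_Icc_self ht
        rw [Real.norm_of_nonneg (hu0 t ht'), Real.norm_of_nonneg (hU_nonneg t ht')]
        exact hbound t ht')
  intro t ht
  exact le_antisymm (by simpa [hU_zero t ht] using hbound t ht) (hu0 t ht)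

namespace LipschitzOnWith

variable {f : ℝ → ℝ} {K : NNReal} {a b : ℝ}

theorem absolutelyContinuousOnInterval_of_le (hf : LipschitzOnWith K f (Icc a b)) (hab : a ≤ b) :
    AbsolutelyContinuousOnInterval f a b :=
  absolutelyContinuousOnInterval (by rwa [uIcc_of_le hab])

theorem sub_le_integral_abs_deriv (hf : LipschitzOnWith K f (Icc a b)) (hab : a ≤ b) :
    f b - f a ≤ ∫ s in a..b, |deriv f s| := by
  have hac := hf.absolutelyContinuousOnInterval_of_le hab
  rw [← hac.integral_deriv_eq_sub]
  exact integral_mono_on hab hac.intervalIntegrable_deriv hac.intervalIntegrable_deriv.abs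
    fun x _ => le_abs_self _

end LipschitzOnWith

theorem gronwall_type_uniqueness_general (T C : ℝ) (hC : 0 ≤ C)
    (ζ : ℝ → ℝ) (K : NNReal)
    (hLip : LipschitzOnWith K ζ (Icc (0:ℝ) T))
    (hnonneg : ∀ t ∈ Icc (0:ℝ) T, 0 ≤ ζ t)
    (h0 : ζ 0 = 0)
    (hae : ∀ᵐ t ∂(volume.restrict (Icc (0:ℝ) T)),
      |deriv ζ t| ≤ C * ζ t + ∫ s in (0:ℝ)..t, |deriv ζ s|) :
    ∀ t ∈ Icc (0:ℝ) T, ζ t = 0 := by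
  intro t ht
  have hT : 0 ≤ T := ht.1.trans ht.2
  set F : ℝ → ℝ := fun x => ∫ s in (0:ℝ)..x, |deriv ζ s|
  have hint : IntervalIntegrable (fun s => |deriv ζ s|) volume 0 T :=
    (hLip.absolutelyContinuousOnInterval_of_le hT).intervalIntegrable_deriv.abs
  have hF_cont : ContinuousOn F (Icc 0 T) := by
    simpa only [uIcc_of_le hT] using continuousOn_primitive_interval' hint left_mem_uIcc
  have hF_nonneg : ∀ x ∈ Icc 0 T, 0 ≤ F x := fun x hx =>
    integral_nonneg hx.1 fun _ _ => abs_nonneg _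
  have hζ_le_F : ∀ x ∈ Icc 0 T, ζ x ≤ F x := fun x hx => by
    simpa [h0] using (hLip.mono (Icc_subset_Icc_right hx.2)).sub_le_integral_abs_deriv hx.1
  have hF_bound : ∀ x ∈ Icc 0 T, F x ≤ (C + 1) * ∫ s in (0:ℝ)..x, F s := by
    intro x hx
    have hsub : Icc 0 x ⊆ Icc 0 T := Icc_subset_Icc_right hx.2
    rw [← intervalIntegral.integral_const_mul]
    refine integral_mono_ae_restrict hx.1
      ((hLip.mono hsub).absolutelyContinuousOnInterval_of_le hx.1).intervalIntegrable_deriv.abs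
      (((hF_cont.mono hsub).intervalIntegrable_of_Icc hx.1).const_mul _) ?_
    filter_upwards [ae_restrict_of_ae_restrict_of_subset hsub hae,
      ae_restrict_mem measurableSet_Icc] with s hs hmem
    calc |deriv ζ s| ≤ C * ζ s + F s := hs
      _ ≤ C * F s + F s := by gcongr; exact hζ_le_F s (hsub hmem)
      _ = (C + 1) * F s := by ring
  have hF_zero := hF_cont.eq_zero_of_le_mul_integral hF_nonneg hF_bound
  exact le_antisymm (hF_zero t ht ▸ hζ_le_F t ht) (hnonneg t ht)

/-- Gronwall-type uniqueness lemma: if `ζ : [0,T] → [0,∞)` is Lipschitz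
with `ζ(0) = 0` and for a.e. `t ∈ [0,T]` one has
`|ζ'(t)| ≤ C ζ(t) + ∫_0^t |ζ'(s)| ds`, then `ζ ≡ 0` on `[0,T]`. -/
theorem gronwall_type_uniqueness (T C : ℝ) (hT : 0 < T) (hC : 0 ≤ C)
    (ζ : ℝ → ℝ) (K : NNReal)
    (hLip : LipschitzOnWith K ζ (Icc (0:ℝ) T))
    (hnonneg : ∀ t ∈ Icc (0:ℝ) T, 0 ≤ ζ t)
    (h0 : ζ 0 = 0)
    (hae : ∀ᵐ t ∂(volume.restrict (Icc (0:ℝ) T)),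
      |deriv ζ t| ≤ C * ζ t + ∫ s in (0:ℝ)..t, |deriv ζ s|) :
    ∀ t ∈ Icc (0:ℝ) T, ζ t = 0 :=
  gronwall_type_uniqueness_general T C hC ζ K hLip hnonneg h0 hae
end
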